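/- arXiv:2203.07065 — 7 statements merged into one kernel-verified Lean document; each statement's English description precedes it below -/
import Mathlib

section
/- If X is a non-degenerate real random variable with everywhere-finite LMGF Λ, E[X] > 0, and Λ(t) → ∞ as t → −∞, then there exists a unique t₀ < 0 with Λ(t₀) = 0. -/
/-!
The moment generating function `M = exp ∘ Λ` is strictly convex, because `t ↦ exp (t x)` is
strictly convex for every `x ≠ 0` and `X` is not a.s. zero; so `M` takes the value `M 0 = 1` at
most once on `(-∞, 0)`. Existence is the intermediate value theorem: `M' 0 = E[X] > 0` gives
`Λ < 0` just left of `0`, while `Λ → ∞` at `-∞`.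
-/

open MeasureTheory ProbabilityTheory Filter Real Set Topology

theorem StrictConvexOn.eq_of_map_eq_of_lt {𝕜 β : Type*} [Field 𝕜] [LinearOrder 𝕜]
    [IsStrictOrderedRing 𝕜] [AddCommMonoid β] [LinearOrder β] [IsOrderedAddMonoid β]
    [Module 𝕜 β] [PosSMulStrictMono 𝕜 β] {s : Set 𝕜} {f : 𝕜 → β} {x y c : 𝕜}
    (hf : StrictConvexOn 𝕜 s f) (hx : x ∈ s) (hy : y ∈ s) (hc : c ∈ s)
    (hxc : x < c) (hyc : y < c) (hfx : f x = f c) (hfy : f y = f c) : x = y := by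
  wlog hxy : x < y generalizing x y
  · rcases (not_lt.1 hxy).lt_or_eq with h | h
    · exact (this hy hx hyc hxc hfy hfx h).symm
    · exact h.symm
  have := hf.lt_on_openSegment hx hc hxc.ne (Ioo_subset_openSegment ⟨hxy, hyc⟩)
  simp [hfx, hfy] at this

theorem HasDerivAt.eventually_nhdsLT_lt {f : ℝ → ℝ} {f' x : ℝ} (hf : HasDerivAt f f' x)
    (hf' : 0 < f') : ∀ᶠ t in 𝓝[<] x, f t < f x := by
  have hslope := (hasDerivAt_iff_tendsto_slope.1 hf).mono_left (nhdsLT_le_nhdsNE x)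
  filter_upwards [hslope.eventually (eventually_gt_nhds hf'), self_mem_nhdsWithin]
    with t hpos ht
  exact (slope_pos_iff_gt ht).1 hpos

namespace ProbabilityTheory

variable {Ω : Type*} [MeasurableSpace Ω] {μ : Measure Ω} {X : Ω → ℝ}

theorem strictConvexOn_mgf (hX : ¬ X =ᵐ[μ] 0) :
    StrictConvexOn ℝ (integrableExpSet X μ) (mgf X μ) := by
  refine ⟨convex_integrableExpSet, fun x hx y hy hxy a b ha hb hab => ?_⟩
  have hmem : a • x + b • y ∈ integrableExpSet X μ :=
    convex_integrableExpSet hx hy ha.le hb.le hab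
  have hsplit : ∀ ω, (a • x + b • y) * X ω = a • (x * X ω) + b • (y * X ω) := fun ω => by
    simp only [smul_eq_mul]; ring
  have hle : ∀ ω, exp ((a • x + b • y) * X ω) ≤ a * exp (x * X ω) + b * exp (y * X ω) :=
    fun ω => hsplit ω ▸ convexOn_exp.2 (mem_univ _) (mem_univ _) ha.le hb.le hab
  have hlt : ∀ ω, X ω ≠ 0 →
      exp ((a • x + b • y) * X ω) < a * exp (x * X ω) + b * exp (y * X ω) := fun ω hω =>
    hsplit ω ▸ strictConvexOn_exp.2 (mem_univ _) (mem_univ _)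
      ((mul_left_injective₀ hω).ne hxy) ha hb hab
  have hint_rhs : Integrable (fun ω => a * exp (x * X ω) + b * exp (y * X ω)) μ :=
    ((integrable_of_mem_integrableExpSet hx).const_mul a).add
      ((integrable_of_mem_integrableExpSet hy).const_mul b)
  have hgap : 0 < ∫ ω, (a * exp (x * X ω) + b * exp (y * X ω)
      - exp ((a • x + b • y) * X ω)) ∂μ := by
    rw [integral_pos_iff_support_of_nonneg_ae (ae_of_all _ fun ω => sub_nonneg.2 (hle ω))
      (hint_rhs.sub (integrable_of_mem_integrableExpSet hmem))]
    refine (pos_iff_ne_zero.2 fun h => hX (ae_iff.2 h)).trans_le (measure_mono fun ω hω => ?_)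
    exact (sub_pos.2 (hlt ω hω)).ne'
  rw [integral_sub hint_rhs (integrable_of_mem_integrableExpSet hmem),
    integral_add ((integrable_of_mem_integrableExpSet hx).const_mul a)
      ((integrable_of_mem_integrableExpSet hy).const_mul b),
    integral_const_mul, integral_const_mul, sub_pos] at hgap
  simpa only [mgf, smul_eq_mul] using hgap

theorem cgf_eq_zero_iff_mgf_eq_one [NeZero μ] {t : ℝ}
    (ht : Integrable (fun ω => exp (t * X ω)) μ) : cgf X μ t = 0 ↔ mgf X μ t = 1 := by
  rw [← exp_cgf ht, exp_eq_one_iff]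

theorem continuous_cgf [NeZero μ] (hint : ∀ t : ℝ, Integrable (fun ω => exp (t * X ω)) μ) :
    Continuous (cgf X μ) :=
  (continuous_mgf hint).log fun t => (mgf_pos' (NeZero.ne μ) (hint t)).ne'

end ProbabilityTheory

theorem cgf_exists_unique_neg_zero_general {Ω : Type*} [MeasurableSpace Ω] (μ : Measure Ω)
    [IsProbabilityMeasure μ] (X : Ω → ℝ)
    (hint : ∀ t : ℝ, Integrable (fun ω => Real.exp (t * X ω)) μ)
    (hnd : ¬ ∃ c : ℝ, X =ᵐ[μ] fun _ => c)
    (hmean : 0 < ∫ ω, X ω ∂μ)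
    (hlim : Tendsto (fun t => cgf X μ t) atBot atTop) :
    ∃! t₀ : ℝ, t₀ < 0 ∧ cgf X μ t₀ = 0 := by
  have hfull : integrableExpSet X μ = univ := eq_univ_of_forall hint
  have hconv : StrictConvexOn ℝ univ (mgf X μ) :=
    hfull ▸ strictConvexOn_mgf fun h => hnd ⟨0, h⟩
  have hderiv : HasDerivAt (mgf X μ) (∫ ω, X ω ∂μ) 0 := by
    simpa using hasDerivAt_mgf (X := X) (μ := μ) (t := 0) (by simp [hfull])
  obtain ⟨t, hmgf_t, ht⟩ := ((hderiv.eventually_nhdsLT_lt hmean).and self_mem_nhdsWithin).exists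
  have hcgf_t : cgf X μ t < 0 := log_neg (mgf_pos (hint t)) (by rwa [mgf_zero] at hmgf_t)
  obtain ⟨s, hcgf_s, hst⟩ := ((hlim.eventually_gt_atTop 0).and (eventually_le_atBot t)).exists
  obtain ⟨t₀, ⟨-, ht₀t⟩, ht₀⟩ :=
    intermediate_value_Icc' hst (continuous_cgf hint).continuousOn ⟨hcgf_t.le, hcgf_s.le⟩
  refine ⟨t₀, ⟨ht₀t.trans_lt ht, ht₀⟩, fun y ⟨hy, hy₀⟩ => ?_⟩
  rw [cgf_eq_zero_iff_mgf_eq_one (hint _), ← mgf_zero (X := X) (μ := μ)] at ht₀ hy₀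
  exact hconv.eq_of_map_eq_of_lt trivial trivial trivial hy (ht₀t.trans_lt ht) hy₀ ht₀

/-- If `X` is a non-degenerate real random variable with everywhere-finite LMGF `Λ`,
`E[X] > 0`, and `Λ(t) → ∞` as `t → -∞`, then there exists a unique `t₀ < 0` with
`Λ(t₀) = 0`. -/
theorem cgf_exists_unique_neg_zero {Ω : Type*} [MeasurableSpace Ω] (μ : Measure Ω)
    [IsProbabilityMeasure μ] (X : Ω → ℝ) (hX : Measurable X)
    (hint : ∀ t : ℝ, Integrable (fun ω => Real.exp (t * X ω)) μ)
    (hnd : ¬ ∃ c : ℝ, X =ᵐ[μ] fun _ => c)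
    (hmean : 0 < ∫ ω, X ω ∂μ)
    (hlim : Tendsto (fun t => cgf X μ t) atBot atTop) :
    ∃! t₀ : ℝ, t₀ < 0 ∧ cgf X μ t₀ = 0 :=
  cgf_exists_unique_neg_zero_general μ X hint hnd hmean hlim
end

section
/- For a non-degenerate real random variable X with everywhere-finite, strictly convex LMGF Λ, the function φ(t) = ∫₀ᵗ Λ(τ)/τ dτ is strictly convex on ℝ. -/
/-!
Since `Λ 0 = 0`, the integrand `Λ τ / τ` is the slope of the secant of `Λ` through `0` and `τ`,
and its value `E[X] = Λ'(0)` at `0` is the limit of these slopes. Strict convexity of `Λ` makes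
this extended slope function strictly increasing, and a primitive of a strictly increasing
function is strictly convex: its average over `[x, y]` stays below its value at `y`, which stays
below its average over `[y, z]`.
-/

open MeasureTheory ProbabilityTheory intervalIntegral

theorem StrictConvexOn.strictMonoOn_slope_update {S : Set ℝ} {g : ℝ → ℝ} {a g' : ℝ}
    (hg : StrictConvexOn ℝ S g) (ha : a ∈ S) (hd : HasDerivAt g g' a) :
    StrictMonoOn (Function.update (slope g a) a g') S := by
  intro s hs t ht hst
  simp only [Function.update_apply]
  rcases eq_or_ne s a with rfl | hsa
  · simpa [hst.ne'] using hg.lt_slope_of_hasDerivAt hs ht hst hd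
  rcases eq_or_ne t a with rfl | hta
  · simpa [hsa, slope_comm g s] using hg.slope_lt_of_hasDerivAt hs ht hst hd
  simpa [hsa, hta, slope_def_field] using hg.secant_strict_mono ha hs ht hsa hta hst

theorem Monotone.intervalIntegral_le_mul {f : ℝ → ℝ} (hf : Monotone f) {a b : ℝ} (hab : a ≤ b) :
    ∫ τ in a..b, f τ ≤ f b * (b - a) := by
  simpa [mul_comm] using integral_mono_on hab hf.intervalIntegrable
    (intervalIntegrable_const (μ := volume)) fun τ hτ => hf hτ.2

theorem Monotone.mul_le_intervalIntegral {f : ℝ → ℝ} (hf : Monotone f) {a b : ℝ} (hab : a ≤ b) :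
    f a * (b - a) ≤ ∫ τ in a..b, f τ := by
  simpa [mul_comm] using integral_mono_on hab (intervalIntegrable_const (μ := volume))
    hf.intervalIntegrable fun τ hτ => hf hτ.1

theorem StrictMono.intervalIntegral_lt_mul {f : ℝ → ℝ} (hf : StrictMono f) {a b : ℝ} (hab : a < b) :
    ∫ τ in a..b, f τ < f b * (b - a) := by
  obtain ⟨m, ham, hmb⟩ := exists_between hab
  calc ∫ τ in a..b, f τ = (∫ τ in a..m, f τ) + ∫ τ in m..b, f τ :=
        (integral_add_adjacent_intervals hf.monotone.intervalIntegrable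
          hf.monotone.intervalIntegrable).symm
    _ ≤ f m * (m - a) + f b * (b - m) := add_le_add
        (hf.monotone.intervalIntegral_le_mul ham.le) (hf.monotone.intervalIntegral_le_mul hmb.le)
    _ < f b * (m - a) + f b * (b - m) := by gcongr; exact hf hmb
    _ = f b * (b - a) := by ring

theorem StrictMono.strictConvexOn_intervalIntegral {f : ℝ → ℝ} (hf : StrictMono f) (a : ℝ) :
    StrictConvexOn ℝ Set.univ (fun t => ∫ τ in a..t, f τ) := by
  refine strictConvexOn_of_slope_strict_mono_adjacent convex_univ fun {x y z} _ _ hxy hyz => ?_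
  rw [integral_interval_sub_left hf.monotone.intervalIntegrable hf.monotone.intervalIntegrable,
    integral_interval_sub_left hf.monotone.intervalIntegrable hf.monotone.intervalIntegrable]
  calc (∫ τ in x..y, f τ) / (y - x) < f y :=
        (div_lt_iff₀ (sub_pos.2 hxy)).2 (hf.intervalIntegral_lt_mul hxy)
    _ ≤ (∫ τ in y..z, f τ) / (z - y) :=
        (le_div_iff₀ (sub_pos.2 hyz)).2 (hf.monotone.mul_le_intervalIntegral hyz.le)

theorem phi_strictConvexOn_general {Ω : Type*} [MeasurableSpace Ω] (μ : Measure Ω)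
    [IsProbabilityMeasure μ] (X : Ω → ℝ)
    (hint : ∀ t : ℝ, Integrable (fun ω => Real.exp (t * X ω)) μ)
    (hconv : StrictConvexOn ℝ Set.univ (fun t => cgf X μ t)) :
    StrictConvexOn ℝ Set.univ
      (fun t : ℝ => ∫ τ in (0 : ℝ)..t,
        (if τ = 0 then ∫ ω, X ω ∂μ else cgf X μ τ / τ)) := by
  have h0 : 0 ∈ interior (integrableExpSet X μ) := by simp [integrableExpSet, hint]
  have hd : HasDerivAt (cgf X μ) (∫ ω, X ω ∂μ) 0 := by
    simpa [deriv_cgf_zero h0] using (analyticAt_cgf h0).differentiableAt.hasDerivAt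
  have hmono := strictMonoOn_univ.1 (hconv.strictMonoOn_slope_update (Set.mem_univ 0) hd)
  convert hmono.strictConvexOn_intervalIntegral 0 using 5 with t τ
  simp [Function.update_apply, slope_def_field, cgf_zero]

/-- For a non-degenerate real random variable `X` with everywhere-finite, strictly convex
LMGF `Λ`, the function `φ(t) = ∫₀ᵗ Λ(τ)/τ dτ` (integrand continuously extended at `0` by
`E[X]`) is strictly convex on `ℝ`. -/
theorem phi_strictConvexOn {Ω : Type*} [MeasurableSpace Ω] (μ : Measure Ω)
    [IsProbabilityMeasure μ] (X : Ω → ℝ) (hX : Measurable X)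
    (hint : ∀ t : ℝ, Integrable (fun ω => Real.exp (t * X ω)) μ)
    (hnd : ¬ ∃ c : ℝ, X =ᵐ[μ] fun _ => c)
    (hconv : StrictConvexOn ℝ Set.univ (fun t => cgf X μ t)) :
    StrictConvexOn ℝ Set.univ
      (fun t : ℝ => ∫ τ in (0 : ℝ)..t,
        (if τ = 0 then ∫ ω, X ω ∂μ else cgf X μ τ / τ)) :=
  phi_strictConvexOn_general μ X hint hconv
end

section
/- Let Λ_k, k = 1,…,N, be strictly convex differentiable functions with Λ_k(0) = 0, Λ_k'(0) > 0, each having a unique negative zero t_k < 0. Let φ_k(t) = ∫₀ᵗ Λ_k(τ)/τ dτ and Φ_k = −inf_t φ_k(t) = −φ_k(t_k). For any weights π_k > 0 with ∑π_k = 1, setting φ(t;π) = ∑_k φ_k(π_k t), one has min_k Φ_k ≤ −inf_t φ(t;π) ≤ ∑_k Φ_k. -/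
/-- Benefit of cooperation: for strictly convex differentiable LMGFs `Λ_k` with
`Λ_k 0 = 0`, `Λ_k'(0) > 0`, each with unique negative zero `t_k`, and
`φ_k(t) = ∫₀ᵗ Λ_k(τ)/τ dτ`, `Φ_k = -φ_k(t_k) = -inf φ_k`, any weights `π_k > 0`
with `∑ π_k = 1` yield `min_k Φ_k ≤ -inf_t ∑_k φ_k(π_k t) ≤ ∑_k Φ_k`. -/
theorem benefit_of_cooperation (N : ℕ) (hN : 0 < N)
    (Λ : Fin N → ℝ → ℝ)
    (hconv : ∀ k, StrictConvexOn ℝ Set.univ (Λ k))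
    (hdiff : ∀ k, Differentiable ℝ (Λ k))
    (h0 : ∀ k, Λ k 0 = 0) (hd : ∀ k, 0 < deriv (Λ k) 0)
    (tk : Fin N → ℝ) (htk : ∀ k, tk k < 0) (hzero : ∀ k, Λ k (tk k) = 0)
    (huniq : ∀ k, ∀ t : ℝ, t < 0 → Λ k t = 0 → t = tk k)
    (φ : Fin N → ℝ → ℝ)
    (hφ : ∀ k t, φ k t = ∫ τ in (0 : ℝ)..t, Λ k τ / τ)
    (Φ : Fin N → ℝ) (hΦ : ∀ k, Φ k = -φ k (tk k))
    (hinf : ∀ k, ∀ t : ℝ, φ k (tk k) ≤ φ k t)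
    (π : Fin N → ℝ) (hπ : ∀ k, 0 < π k) (hsum : ∑ k, π k = 1) :
    (⨅ k, Φ k) ≤ -(⨅ t : ℝ, ∑ k, φ k (π k * t)) ∧
      -(⨅ t : ℝ, ∑ k, φ k (π k * t)) ≤ ∑ k, Φ k := by
  have hNE : Nonempty (Fin N) := ⟨⟨0, hN⟩⟩
  -- Λ k ≤ 0 on [tk k, 0]
  have hΛle : ∀ k, ∀ u ∈ Set.Icc (tk k) 0, Λ k u ≤ 0 := by
    intro k u hu
    have hseg : u ∈ segment ℝ (tk k) 0 := by
      rwa [segment_eq_Icc (le_of_lt (htk k))]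
    have := (hconv k).convexOn.le_on_segment (Set.mem_univ (tk k)) (Set.mem_univ 0) hseg
    simpa [h0 k, hzero k] using this
  -- φ k s ≤ 0 for s ∈ [tk k, 0]
  have hφle : ∀ k s, tk k ≤ s → s ≤ 0 → φ k s ≤ 0 := by
    intro k s h1 h2
    rw [hφ k s, intervalIntegral.integral_symm]
    have : 0 ≤ ∫ τ in s..(0:ℝ), Λ k τ / τ := by
      apply intervalIntegral.integral_nonneg h2
      intro u hu
      rcases eq_or_lt_of_le hu.2 with h | h
      · simp [h]
      · exact div_nonneg_iff.2 (Or.inr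
          ⟨hΛle k u ⟨le_trans h1 hu.1, hu.2⟩, le_of_lt h⟩)
    linarith
  -- choose m maximizing tk k / π k
  obtain ⟨m, -, hm⟩ := Finset.exists_max_image Finset.univ (fun k => tk k / π k)
    ⟨⟨0, hN⟩, Finset.mem_univ _⟩
  set tm := tk m / π m with htm
  have htm_neg : tm < 0 := div_neg_of_neg_of_pos (htk m) (hπ m)
  have hmm : π m * tm = tk m := by
    rw [htm, mul_div_cancel₀ _ (ne_of_gt (hπ m))]
  have hterm : ∀ k, φ k (π k * tm) ≤ 0 := by
    intro k
    have h1 : tk k ≤ π k * tm := by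
      have := hm k (Finset.mem_univ k)
      calc tk k = π k * (tk k / π k) := by
            rw [mul_div_cancel₀ _ (ne_of_gt (hπ k))]
        _ ≤ π k * tm := by
            exact mul_le_mul_of_nonneg_left this (le_of_lt (hπ k))
    exact hφle k _ h1 (le_of_lt (mul_neg_of_pos_of_neg (hπ k) htm_neg))
  -- value at tm bounded by φ m (tk m)
  have hsum_le : ∑ k, φ k (π k * tm) ≤ φ m (tk m) := by
    have he : ∑ k ∈ Finset.univ.erase m, φ k (π k * tm) ≤ 0 :=
      Finset.sum_nonpos fun i _ => hterm i
    have := Finset.add_sum_erase Finset.univ (fun k => φ k (π k * tm))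
      (Finset.mem_univ m)
    rw [← this, hmm]
    linarith
  -- bddBelow of the inner function
  have hlb : ∀ t : ℝ, ∑ k, φ k (tk k) ≤ ∑ k, φ k (π k * t) := by
    intro t
    exact Finset.sum_le_sum fun k _ => hinf k (π k * t)
  have hbdd : BddBelow (Set.range fun t : ℝ => ∑ k, φ k (π k * t)) :=
    ⟨∑ k, φ k (tk k), by rintro x ⟨t, rfl⟩; exact hlb t⟩
  have hinf_le : (⨅ t : ℝ, ∑ k, φ k (π k * t)) ≤ φ m (tk m) :=
    le_trans (ciInf_le hbdd tm) hsum_le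
  constructor
  · -- lower bound
    have h1 : (⨅ k, Φ k) ≤ Φ m :=
      ciInf_le (Set.Finite.bddBelow (Set.finite_range Φ)) m
    have h2 : Φ m ≤ -(⨅ t : ℝ, ∑ k, φ k (π k * t)) := by
      rw [hΦ m]; linarith
    linarith
  · -- upper bound
    have h1 : -(∑ k, Φ k) ≤ ⨅ t : ℝ, ∑ k, φ k (π k * t) := by
      apply le_ciInf
      intro t
      have : ∑ k, φ k (tk k) = -(∑ k, Φ k) := by
        rw [← Finset.sum_neg_distrib]
        exact Finset.sum_congr rfl fun k _ => by rw [hΦ k, neg_neg]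
      linarith [hlb t]
    linarith
end

section
/- In the setting of the previous context (strictly convex Λ_k with Λ_k(0)=0 and unique negative zero t_k), the weights π_k† = t_k / ∑_ℓ t_ℓ (k = 1,…,N) satisfy π_k† > 0, ∑_k π_k† = 1, and achieve the upper bound: −inf_t ∑_k φ_k(π_k† t) = ∑_k Φ_k. -/
/-- Optimal Perron eigenvector: with `Λ_k`, `t_k`, `φ_k`, `Φ_k` as in the benefit-of-cooperation
setting, the weights `π†_k = t_k / ∑ ℓ t_ℓ` are positive, sum to one, and achieve the upper
bound: `-inf_t ∑_k φ_k(π†_k t) = ∑_k Φ_k`. -/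
theorem optimal_perron_achieves_bound (N : ℕ) (hN : 0 < N)
    (Λ : Fin N → ℝ → ℝ)
    (hconv : ∀ k, StrictConvexOn ℝ Set.univ (Λ k))
    (hdiff : ∀ k, Differentiable ℝ (Λ k))
    (h0 : ∀ k, Λ k 0 = 0) (hd : ∀ k, 0 < deriv (Λ k) 0)
    (tk : Fin N → ℝ) (htk : ∀ k, tk k < 0) (hzero : ∀ k, Λ k (tk k) = 0)
    (huniq : ∀ k, ∀ t : ℝ, t < 0 → Λ k t = 0 → t = tk k)
    (φ : Fin N → ℝ → ℝ)
    (hφ : ∀ k t, φ k t = ∫ τ in (0 : ℝ)..t, Λ k τ / τ)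
    (Φ : Fin N → ℝ) (hΦ : ∀ k, Φ k = -φ k (tk k))
    (hinf : ∀ k, ∀ t : ℝ, φ k (tk k) ≤ φ k t) :
    let πd : Fin N → ℝ := fun k => tk k / ∑ ℓ, tk ℓ
    (∀ k, 0 < πd k) ∧ (∑ k, πd k = 1) ∧
      -(⨅ t : ℝ, ∑ k, φ k (πd k * t)) = ∑ k, Φ k := by
  intro πd
  have hS : (∑ ℓ, tk ℓ) < 0 :=
    Finset.sum_neg (fun k _ => htk k) (Finset.univ_nonempty_iff.mpr ⟨⟨0, hN⟩⟩)
  have hSne : (∑ ℓ, tk ℓ) ≠ 0 := ne_of_lt hS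
  have hpos : ∀ k, 0 < πd k := fun k => div_pos_of_neg_of_neg (htk k) hS
  refine ⟨hpos, ?_, ?_⟩
  · simp only [πd, ← Finset.sum_div, div_self hSne]
  · have hval : ∀ k, πd k * (∑ ℓ, tk ℓ) = tk k := fun k => div_mul_cancel₀ _ hSne
    have hlb : ∀ t : ℝ, (∑ k, φ k (tk k)) ≤ ∑ k, φ k (πd k * t) :=
      fun t => Finset.sum_le_sum (fun k _ => hinf k _)
    have heq : (⨅ t : ℝ, ∑ k, φ k (πd k * t)) = ∑ k, φ k (tk k) := by
      apply le_antisymm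
      · have := ciInf_le ⟨∑ k, φ k (tk k), fun y ⟨t, ht⟩ => ht ▸ hlb t⟩ (∑ ℓ, tk ℓ)
        refine le_trans this (le_of_eq ?_)
        exact Finset.sum_congr rfl (fun k _ => by rw [hval k])
      · exact le_ciInf hlb
    rw [heq]
    simp [hΦ]
end

section
/- If the Λ_k are as in the previous context and there exist indices m ≠ n with π_m t_n ≠ π_n t_m (weights not proportional to the t_k), then −inf_t ∑_k φ_k(π_k t) < ∑_k Φ_k; i.e., the upper bound is attained only by the proportional weights. -/
lemma aux_strict_min (f : ℝ → ℝ) (h : StrictConvexOn ℝ Set.univ f) (s : ℝ)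
    (hmin : ∀ t, f s ≤ f t) {x : ℝ} (hx : x ≠ s) : f s < f x := by
  by_contra h'
  push_neg at h'
  have h2 := h.2 (Set.mem_univ x) (Set.mem_univ s) hx (by norm_num : (0:ℝ) < 1/2)
    (by norm_num : (0:ℝ) < 1/2) (by norm_num)
  have h3 := hmin ((1/2:ℝ) • x + (1/2:ℝ) • s)
  simp only [smul_eq_mul] at h2 h3
  linarith

lemma aux_beyond (f : ℝ → ℝ) (h : ConvexOn ℝ Set.univ f) (s d : ℝ)
    (hmin : ∀ t, f s ≤ f t) (hd : 0 ≤ d) {x : ℝ} (hx : d ≤ |x - s|) :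
    min (f (s + d)) (f (s - d)) ≤ f x := by
  rcases le_or_gt s x with hsx | hsx
  · have hxs : s + d ≤ x := by
      have h1 : |x - s| = x - s := abs_of_nonneg (by linarith)
      rw [h1] at hx; linarith
    have hseg : s + d ∈ segment ℝ s x := by
      rw [segment_eq_Icc (by linarith : s ≤ x)]
      exact ⟨by linarith, hxs⟩
    have h2 := h.le_on_segment (Set.mem_univ s) (Set.mem_univ x) hseg
    have h3 : f (s + d) ≤ f x := h2.trans_eq (max_eq_right (hmin x))
    exact (min_le_left _ _).trans h3
  · have hxs : x ≤ s - d := by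
      have h1 : |x - s| = s - x := by rw [abs_sub_comm]; exact abs_of_nonneg (by linarith)
      rw [h1] at hx; linarith
    have hseg : s - d ∈ segment ℝ x s := by
      rw [segment_eq_Icc (by linarith : x ≤ s)]
      exact ⟨hxs, by linarith⟩
    have h2 := h.le_on_segment (Set.mem_univ x) (Set.mem_univ s) hseg
    have h3 : f (s - d) ≤ f x := by
      rcases max_cases (f x) (f s) with ⟨he, _⟩ | ⟨he, _⟩
      · exact h2.trans_eq he
      · exact h2.trans (he.le.trans (hmin x))
    exact (min_le_right _ _).trans h3

/-- Necessity of proportional weights: with `Λ_k`, `t_k`, `φ_k`, `Φ_k` as before, if the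
weights `π` are not proportional to the `t_k` (there exist `m ≠ n` with
`π_m t_n ≠ π_n t_m`), then `-inf_t ∑_k φ_k(π_k t) < ∑_k Φ_k`. -/
theorem nonproportional_weights_strict (N : ℕ) (hN : 0 < N)
    (Λ : Fin N → ℝ → ℝ)
    (hconv : ∀ k, StrictConvexOn ℝ Set.univ (Λ k))
    (hdiff : ∀ k, Differentiable ℝ (Λ k))
    (h0 : ∀ k, Λ k 0 = 0) (hd : ∀ k, 0 < deriv (Λ k) 0)
    (tk : Fin N → ℝ) (htk : ∀ k, tk k < 0) (hzero : ∀ k, Λ k (tk k) = 0)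
    (huniq : ∀ k, ∀ t : ℝ, t < 0 → Λ k t = 0 → t = tk k)
    (φ : Fin N → ℝ → ℝ)
    (hφ : ∀ k t, φ k t = ∫ τ in (0 : ℝ)..t, Λ k τ / τ)
    (hφconv : ∀ k, StrictConvexOn ℝ Set.univ (φ k))
    (Φ : Fin N → ℝ) (hΦ : ∀ k, Φ k = -φ k (tk k))
    (hinf : ∀ k, ∀ t : ℝ, φ k (tk k) ≤ φ k t)
    (π : Fin N → ℝ) (hπ : ∀ k, 0 < π k) (hsum : ∑ k, π k = 1)
    (m n : Fin N) (hmn : m ≠ n) (hprop : π m * tk n ≠ π n * tk m) :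
    -(⨅ t : ℝ, ∑ k, φ k (π k * t)) < ∑ k, Φ k := by
  set t1 := tk m / π m with ht1
  set t2 := tk n / π n with ht2
  have ht12 : t1 ≠ t2 := by
    intro h
    apply hprop
    rw [ht1, ht2, div_eq_div_iff (hπ m).ne' (hπ n).ne'] at h
    linarith
  set δ : ℝ := |t1 - t2| / 2 with hδdef
  have hδ : 0 < δ := by
    have : t1 - t2 ≠ 0 := sub_ne_zero.mpr ht12
    have := abs_pos.mpr this
    positivity
  -- epsilons
  set εm : ℝ := min (φ m (tk m + π m * δ)) (φ m (tk m - π m * δ)) - φ m (tk m) with hεmdef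
  set εn : ℝ := min (φ n (tk n + π n * δ)) (φ n (tk n - π n * δ)) - φ n (tk n) with hεndef
  have hεpos : ∀ j : Fin N,
      0 < min (φ j (tk j + π j * δ)) (φ j (tk j - π j * δ)) - φ j (tk j) := by
    intro j
    have hp : 0 < π j * δ := mul_pos (hπ j) hδ
    have h1 : φ j (tk j) < φ j (tk j + π j * δ) :=
      aux_strict_min (φ j) (hφconv j) (tk j) (hinf j) (by linarith)
    have h2 : φ j (tk j) < φ j (tk j - π j * δ) :=
      aux_strict_min (φ j) (hφconv j) (tk j) (hinf j) (by intro h; nlinarith [hp, sub_eq_iff_eq_add.mp h])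
    have := lt_min h1 h2
    linarith
  set ε : ℝ := min εm εn with hεdef
  have hε : 0 < ε := lt_min (hεpos m) (hεpos n)
  -- key bound for a single index j
  have step : ∀ (j : Fin N) (t : ℝ), π j * δ ≤ |π j * t - tk j| →
      ε ≤ min (φ j (tk j + π j * δ)) (φ j (tk j - π j * δ)) - φ j (tk j) →
      (∑ k, φ k (tk k)) + ε ≤ ∑ k, φ k (π k * t) := by
    intro j t hj hεj
    have hbound : ∀ k : Fin N, φ k (tk k) + (if k = j then ε else 0) ≤ φ k (π k * t) := by
      intro k
      by_cases hk : k = j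
      · subst hk
        rw [if_pos rfl]
        have h1 := aux_beyond (φ k) (hφconv k).convexOn (tk k) (π k * δ) (hinf k)
          (mul_pos (hπ k) hδ).le hj
        linarith
      · simp only [if_neg hk, add_zero]
        exact hinf k (π k * t)
    calc (∑ k, φ k (tk k)) + ε
        = ∑ k, (φ k (tk k) + if k = j then ε else 0) := by
          rw [Finset.sum_add_distrib]
          congr 1
          simp
      _ ≤ ∑ k, φ k (π k * t) := Finset.sum_le_sum fun k _ => hbound k
  -- every t is far from t1 or from t2
  have key : ∀ t : ℝ, (∑ k, φ k (tk k)) + ε ≤ ∑ k, φ k (π k * t) := by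
    intro t
    have hcase : π m * δ ≤ |π m * t - tk m| ∨ π n * δ ≤ |π n * t - tk n| := by
      by_contra h
      push_neg at h
      obtain ⟨h1, h2⟩ := h
      have e1 : π m * t - tk m = π m * (t - t1) := by
        rw [ht1]; field_simp [(hπ m).ne']
      have e2 : π n * t - tk n = π n * (t - t2) := by
        rw [ht2]; field_simp [(hπ n).ne']
      rw [e1, abs_mul, abs_of_pos (hπ m)] at h1
      rw [e2, abs_mul, abs_of_pos (hπ n)] at h2
      have h1' : |t - t1| < δ := lt_of_mul_lt_mul_left h1 (hπ m).le
      have h2' : |t - t2| < δ := lt_of_mul_lt_mul_left h2 (hπ n).le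
      have : |t1 - t2| ≤ |t - t1| + |t - t2| := by
        calc |t1 - t2| = |(t - t2) - (t - t1)| := by ring_nf
          _ ≤ |t - t2| + |t - t1| := abs_sub _ _
          _ = |t - t1| + |t - t2| := by ring
      rw [hδdef] at h1' h2'
      linarith
    rcases hcase with hc | hc
    · exact step m t hc (min_le_left _ _)
    · exact step n t hc (min_le_right _ _)
  have hinf_ge : (∑ k, φ k (tk k)) + ε ≤ ⨅ t : ℝ, ∑ k, φ k (π k * t) :=
    le_ciInf key
  have hΦsum : ∑ k, Φ k = -∑ k, φ k (tk k) := by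
    rw [← Finset.sum_neg_distrib]
    exact Finset.sum_congr rfl fun k _ => hΦ k
  rw [hΦsum]
  linarith
end

section
/- If all N agents have identical LMGFs Λ_k = Λ (strictly convex, Λ(0) = 0, Λ'(0) > 0, unique negative zero t₀ < 0), then the uniform weight vector π = (1/N)·𝟙 is the unique maximizer of Φ(π) = −inf_t ∑_k φ(π_k t), and the maximal value is N·Φ₁, where Φ₁ = −inf_t φ(t) is the single-agent exponent. -/
/-!
The integrand `Λ τ / τ` is the secant slope of `Λ` through `0`, extended continuously at `0`
by `dslope Λ 0`; strict convexity makes it strictly increasing, and it vanishes at `t₀`. So `φ`,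
whose derivative it is, strictly decreases up to `t₀` and strictly increases after it: `t₀` is
the unique minimizer, and `φ s ≥ φ t₀ + m` with a fixed `m > 0` as soon as `|s - t₀| ≥ δ`.
Hence `∑ₖ φ (πₖ t) ≥ N φ(t₀)`, with equality for uniform weights at `t = N t₀`. For
non-uniform weights two of them differ, `πᵢ ≠ πⱼ`, and `πᵢ t`, `πⱼ t` can never both be
`δ`-close to `t₀`, so the sum stays above `N φ(t₀) + m`.
-/

open Set

theorem ciInf_eq_of_forall_ge_of_eq {α ι : Type*} [ConditionallyCompleteLattice α]
    {f : ι → α} {b : α} (h : ∀ i, b ≤ f i) (i : ι) (hi : f i = b) : ⨅ i, f i = b :=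
  have : Nonempty ι := ⟨i⟩
  IsGLB.ciInf_eq (IsLeast.isGLB ⟨⟨i, hi⟩, forall_mem_range.2 h⟩)

section SecantSlope

variable {f : ℝ → ℝ} {t₀ t : ℝ}

theorem dslope_zero_eq_div (hf0 : f 0 = 0) (ht : t ≠ 0) : dslope f 0 t = f t / t := by
  rw [dslope_of_ne f ht, slope_def_field, hf0, sub_zero, sub_zero]

theorem StrictConvexOn.dslope_zero_neg (hf : StrictConvexOn ℝ univ f) (hf0 : f 0 = 0)
    (ht₀ : t₀ < 0) (hft₀ : f t₀ = 0) (ht : t < t₀) : dslope f 0 t < 0 := by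
  have := hf.secant_strict_mono (mem_univ 0) (mem_univ t) (mem_univ t₀) (by linarith)
    ht₀.ne ht
  rwa [hft₀, hf0, sub_self, zero_div, sub_zero, sub_zero,
    ← dslope_zero_eq_div hf0 (by linarith)] at this

theorem StrictConvexOn.dslope_zero_pos (hf : StrictConvexOn ℝ univ f) (hf0 : f 0 = 0)
    (hd : 0 < deriv f 0) (ht₀ : t₀ ≠ 0) (hft₀ : f t₀ = 0) (ht : t₀ < t) :
    0 < dslope f 0 t := by
  rcases eq_or_ne t 0 with rfl | ht0
  · rwa [dslope_same]
  have := hf.secant_strict_mono (mem_univ 0) (mem_univ t₀) (mem_univ t) ht₀ ht0 ht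
  rwa [hft₀, hf0, sub_self, zero_div, sub_zero, sub_zero, ← dslope_zero_eq_div hf0 ht0] at this

theorem hasDerivAt_integral_div (hf : Differentiable ℝ f) (hf0 : f 0 = 0) (t : ℝ) :
    HasDerivAt (fun t => ∫ τ in (0 : ℝ)..t, f τ / τ) (dslope f 0 t) t := by
  have hcont : Continuous (dslope f 0) := continuousOn_univ.1 <|
    (continuousOn_dslope Filter.univ_mem).2 ⟨hf.continuous.continuousOn, hf 0⟩
  have hint : ∀ t, ∫ τ in (0 : ℝ)..t, f τ / τ = ∫ τ in (0 : ℝ)..t, dslope f 0 τ := fun t =>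
    intervalIntegral.integral_congr_ae <| (MeasureTheory.Measure.ae_ne _ 0).mono
      fun τ hτ _ => (dslope_zero_eq_div hf0 hτ).symm
  simp_rw [hint]
  exact (hcont.integral_hasStrictDerivAt 0 t).hasDerivAt

end SecantSlope

section Valley

variable {φ : ℝ → ℝ} {a : ℝ}

theorem strictAntiOn_Iic_strictMonoOn_Ici_of_hasDerivAt {φ' : ℝ → ℝ}
    (hφ : ∀ t, HasDerivAt φ (φ' t) t) (hneg : ∀ t < a, φ' t < 0) (hpos : ∀ t, a < t → 0 < φ' t) :
    StrictAntiOn φ (Iic a) ∧ StrictMonoOn φ (Ici a) := by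
  have hcont : Continuous φ := continuous_iff_continuousAt.2 fun t => (hφ t).continuousAt
  constructor
  · refine strictAntiOn_of_hasDerivWithinAt_neg (convex_Iic a) hcont.continuousOn
      (fun t _ => (hφ t).hasDerivWithinAt) fun t ht => hneg t ?_
    rwa [interior_Iic] at ht
  · refine strictMonoOn_of_hasDerivWithinAt_pos (convex_Ici a) hcont.continuousOn
      (fun t _ => (hφ t).hasDerivWithinAt) fun t ht => hpos t ?_
    rwa [interior_Ici] at ht

theorem le_of_strictAntiOn_Iic_of_strictMonoOn_Ici (hanti : StrictAntiOn φ (Iic a))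
    (hmono : StrictMonoOn φ (Ici a)) (s : ℝ) : φ a ≤ φ s := by
  rcases le_total s a with hs | hs
  · exact hanti.antitoneOn hs self_mem_Iic hs
  · exact hmono.monotoneOn self_mem_Ici hs hs

theorem exists_gap_of_strictAntiOn_Iic_of_strictMonoOn_Ici (hanti : StrictAntiOn φ (Iic a))
    (hmono : StrictMonoOn φ (Ici a)) {δ : ℝ} (hδ : 0 < δ) :
    ∃ m, φ a < m ∧ ∀ s, δ ≤ |s - a| → m ≤ φ s := by
  have hl : a - δ ∈ Iic a := by simp [hδ.le]
  have hr : a + δ ∈ Ici a := by simp [hδ.le]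
  refine ⟨min (φ (a - δ)) (φ (a + δ)), lt_min (hanti hl self_mem_Iic (by linarith))
    (hmono self_mem_Ici hr (by linarith)), fun s hs => ?_⟩
  rcases le_abs'.1 hs with hs | hs
  · exact (min_le_left _ _).trans (hanti.antitoneOn (by simp; linarith) hl (by linarith))
  · exact (min_le_right _ _).trans (hmono.monotoneOn hr (by simp; linarith) (by linarith))

end Valley

-- `b (a t - c) - a (b t - c) = (a - b) c`, so both terms cannot be small.
theorem exists_pos_forall_le_abs_mul_sub_or {a b c : ℝ} (ha : 0 < a) (hb : 0 < b) (hab : a ≠ b)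
    (hc : c ≠ 0) : ∃ δ > 0, ∀ t, δ ≤ |a * t - c| ∨ δ ≤ |b * t - c| := by
  refine ⟨|c| * |a - b| / (a + b), by positivity, fun t => ?_⟩
  by_contra! hsmall
  have hkey : |c| * |a - b| ≤ b * |a * t - c| + a * |b * t - c| := by
    calc |c| * |a - b| = |b * (a * t - c) - a * (b * t - c)| := by
          rw [← abs_mul]; congr 1; ring
      _ ≤ |b * (a * t - c)| + |a * (b * t - c)| := abs_sub _ _
      _ = b * |a * t - c| + a * |b * t - c| := by
          rw [abs_mul, abs_mul, abs_of_pos ha, abs_of_pos hb]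
  have hδ : |c| * |a - b| = (a + b) * (|c| * |a - b| / (a + b)) := by field_simp
  nlinarith [hsmall.1, hsmall.2]

theorem exists_ne_of_sum_eq_one {ι : Type*} [Fintype ι] {π : ι → ℝ} (hsum : ∑ i, π i = 1)
    (hne : π ≠ fun _ => 1 / (Fintype.card ι : ℝ)) : ∃ i j, π i ≠ π j := by
  by_contra! hconst
  obtain ⟨i⟩ : Nonempty ι := by
    by_contra! hempty
    simp at hsum
  have hπ : π = fun _ => π i := funext fun j => hconst j i
  rw [hπ, Finset.sum_const, Finset.card_univ, nsmul_eq_mul] at hsum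
  exact hne (hπ.trans (funext fun _ => eq_one_div_of_mul_eq_one_right hsum))

theorem card_mul_add_sub_le_sum {ι : Type*} [Fintype ι] {f : ι → ℝ} {c m : ℝ}
    (hc : ∀ k, c ≤ f k) (i : ι) (hi : m ≤ f i) : Fintype.card ι * c + (m - c) ≤ ∑ k, f k := by
  have := Finset.single_le_sum (f := fun k => f k - c) (fun k _ => sub_nonneg.2 (hc k))
    (Finset.mem_univ i)
  simp only [Finset.sum_sub_distrib, Finset.sum_const, Finset.card_univ, nsmul_eq_mul] at this
  linarith

theorem identical_agents_uniform_optimal_general (N : ℕ) (hN : 0 < N)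
    (Λ : ℝ → ℝ)
    (hconv : StrictConvexOn ℝ Set.univ Λ)
    (hdiff : Differentiable ℝ Λ)
    (h0 : Λ 0 = 0) (hd : 0 < deriv Λ 0)
    (t0 : ℝ) (ht0 : t0 < 0) (hzero : Λ t0 = 0)
    (φ : ℝ → ℝ) (hφ : ∀ t, φ t = ∫ τ in (0 : ℝ)..t, Λ τ / τ)
    (Φ1 : ℝ) (hΦ1 : Φ1 = -(⨅ t : ℝ, φ t)) :
    (-(⨅ t : ℝ, ∑ _k : Fin N, φ ((1 / (N : ℝ)) * t)) = N * Φ1) ∧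
      (∀ π : Fin N → ℝ, (∀ k, 0 < π k) → (∑ k, π k = 1) →
        π ≠ (fun _ => 1 / (N : ℝ)) →
        -(⨅ t : ℝ, ∑ k, φ (π k * t)) < N * Φ1) := by
  obtain ⟨hanti, hmono⟩ : StrictAntiOn φ (Iic t0) ∧ StrictMonoOn φ (Ici t0) := by
    obtain rfl : φ = _ := funext hφ
    exact strictAntiOn_Iic_strictMonoOn_Ici_of_hasDerivAt (hasDerivAt_integral_div hdiff h0)
      (fun t ht => hconv.dslope_zero_neg h0 ht0 hzero ht)
      (fun t ht => hconv.dslope_zero_pos h0 hd ht0.ne hzero ht)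
  have hmin := le_of_strictAntiOn_Iic_of_strictMonoOn_Ici hanti hmono
  have hΦ1' : Φ1 = -φ t0 := by rw [hΦ1, ciInf_eq_of_forall_ge_of_eq hmin t0 rfl]
  have hNpos : (0 : ℝ) < N := Nat.cast_pos.2 hN
  refine ⟨?_, fun π hπpos hπsum hπne => ?_⟩
  · simp only [Finset.sum_const, Finset.card_univ, Fintype.card_fin, nsmul_eq_mul]
    rw [ciInf_eq_of_forall_ge_of_eq (b := N * φ t0) (fun t => by gcongr; exact hmin _) (N * t0)
      (by rw [one_div, inv_mul_cancel_left₀ hNpos.ne']), hΦ1']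
    ring
  obtain ⟨i, j, hij⟩ := exists_ne_of_sum_eq_one hπsum (by simpa using hπne)
  obtain ⟨δ, hδ, hfar⟩ :=
    exists_pos_forall_le_abs_mul_sub_or (hπpos i) (hπpos j) hij ht0.ne
  obtain ⟨m, hm, hgap⟩ := exists_gap_of_strictAntiOn_Iic_of_strictMonoOn_Ici hanti hmono hδ
  have hsum : ∀ t, N * φ t0 + (m - φ t0) ≤ ∑ k, φ (π k * t) := fun t => by
    rcases hfar t with h | h
    · simpa using card_mul_add_sub_le_sum (fun k => hmin (π k * t)) i (hgap _ h)
    · simpa using card_mul_add_sub_le_sum (fun k => hmin (π k * t)) j (hgap _ h)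
  have hinf := le_ciInf hsum
  rw [hΦ1']
  linarith

/-- Distributed detection (identical agents): if all `N` agents share the same LMGF `Λ`
(strictly convex, `Λ 0 = 0`, `Λ'(0) > 0`, unique negative zero `t₀`), then the uniform
weights `π = (1/N)𝟙` are the unique maximizer of `Φ(π) = -inf_t ∑_k φ(π_k t)`, and the
maximal value is `N * Φ₁` with `Φ₁ = -inf_t φ(t)`. -/
theorem identical_agents_uniform_optimal (N : ℕ) (hN : 0 < N)
    (Λ : ℝ → ℝ)
    (hconv : StrictConvexOn ℝ Set.univ Λ)
    (hdiff : Differentiable ℝ Λ)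
    (h0 : Λ 0 = 0) (hd : 0 < deriv Λ 0)
    (t0 : ℝ) (ht0 : t0 < 0) (hzero : Λ t0 = 0)
    (huniq : ∀ t : ℝ, t < 0 → Λ t = 0 → t = t0)
    (φ : ℝ → ℝ) (hφ : ∀ t, φ t = ∫ τ in (0 : ℝ)..t, Λ τ / τ)
    (Φ1 : ℝ) (hΦ1 : Φ1 = -(⨅ t : ℝ, φ t)) :
    (-(⨅ t : ℝ, ∑ _k : Fin N, φ ((1 / (N : ℝ)) * t)) = N * Φ1) ∧
      (∀ π : Fin N → ℝ, (∀ k, 0 < π k) → (∑ k, π k = 1) →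
        π ≠ (fun _ => 1 / (N : ℝ)) →
        -(⨅ t : ℝ, ∑ k, φ (π k * t)) < N * Φ1) :=
  identical_agents_uniform_optimal_general N hN Λ hconv hdiff h0 hd t0 ht0 hzero φ hφ Φ1 hΦ1
end

section
/- Under the accurate signal model, for any collection of N agents whose log-likelihood-ratio LMGFs Λ_k are strictly convex (informative agents), all unique negative zeros coincide: t_k = −1 for all k; consequently the uniform weights π = (1/N)𝟙 achieve the upper bound ∑_k Φ_k on the error exponent. -/
/-!
Strict convexity lets `Λ_k` take the value `0` at most twice, and it already vanishes at `0` and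
`-1`, so `-1` is its only negative zero. Because `Λ_k 0 = 0`, the integrand `Λ_k τ / τ` is the
slope of `Λ_k` at `0`, which (completed by `Λ_k'(0)` at `τ = 0`) is monotone by convexity and
vanishes at `-1`; its primitive `φ_k` is therefore minimised at `-1`. With uniform weights every
rescaled argument `t / N` reaches `-1` at the same `t = -N`, so the network objective attains
`∑_k φ_k(-1) = -∑_k Φ_k`.
-/

open Set MeasureTheory

section

variable {𝕜 β : Type*} [Field 𝕜] [LinearOrder 𝕜] [IsStrictOrderedRing 𝕜]
  [AddCommMonoid β] [LinearOrder β] [IsOrderedAddMonoid β] [Module 𝕜 β] [PosSMulStrictMono 𝕜 β]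
  {s : Set 𝕜} {f : 𝕜 → β} {a b c : 𝕜}

theorem StrictConvexOn.eq_of_map_eq_of_lt_s17 (hf : StrictConvexOn 𝕜 s f) (ha : a ∈ s) (hb : b ∈ s)
    (hc : c ∈ s) (hac : a < c) (hbc : b < c) (hfa : f a = f c) (hfb : f b = f c) : a = b := by
  wlog hab : a ≤ b generalizing a b
  · exact (this hb ha hbc hac hfb hfa (le_of_not_ge hab)).symm
  by_contra hne
  have hmid : b ∈ openSegment 𝕜 a c := by
    rw [openSegment_eq_Ioo hac]
    exact ⟨lt_of_le_of_ne hab hne, hbc⟩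
  have := hf.lt_on_openSegment ha hc hac.ne hmid
  rw [hfa, hfb, max_self] at this
  exact this.false

end

theorem ConvexOn.monotone_dslope {f : ℝ → ℝ} {a : ℝ} (hf : ConvexOn ℝ univ f)
    (hfa : DifferentiableAt ℝ f a) : Monotone (dslope f a) := by
  intro x y hxy
  rcases hxy.eq_or_lt with rfl | hxy
  · rfl
  rcases eq_or_ne x a with rfl | hx
  · rw [dslope_same, dslope_of_ne f hxy.ne']
    exact hf.deriv_le_slope trivial trivial hxy hfa
  rcases eq_or_ne y a with rfl | hy
  · rw [dslope_same, dslope_of_ne f hx, slope_comm]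
    exact hf.slope_le_deriv trivial trivial hxy hfa
  rw [dslope_of_ne f hx, dslope_of_ne f hy]
  exact hf.slope_mono trivial ⟨trivial, hx⟩ ⟨trivial, hy⟩ hxy.le

theorem Monotone.isMinOn_integral_of_map_eq_zero {g : ℝ → ℝ} (hg : Monotone g) {c : ℝ}
    (hc : g c = 0) (a : ℝ) : IsMinOn (fun t ↦ ∫ τ in a..t, g τ) univ c := by
  intro t _
  have hint : ∀ x y : ℝ, IntervalIntegrable g volume x y :=
    fun x y ↦ (hg.monotoneOn _).intervalIntegrable
  show ∫ τ in a..c, g τ ≤ ∫ τ in a..t, g τ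
  rw [← intervalIntegral.integral_add_adjacent_intervals (hint a c) (hint c t),
    le_add_iff_nonneg_right]
  rcases le_total c t with hct | htc
  · exact intervalIntegral.integral_nonneg hct fun τ hτ ↦ hc ▸ hg hτ.1
  · rw [intervalIntegral.integral_symm, neg_nonneg]
    calc ∫ τ in t..c, g τ ≤ ∫ _ in t..c, (0 : ℝ) :=
          intervalIntegral.integral_mono_on htc (hint t c) intervalIntegrable_const
            fun τ hτ ↦ hc ▸ hg hτ.2
      _ = 0 := intervalIntegral.integral_zero

theorem intervalIntegral.integral_div_eq_integral_dslope {f : ℝ → ℝ} (hf : f 0 = 0) (a b : ℝ) :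
    ∫ τ in a..b, f τ / τ = ∫ τ in a..b, dslope f 0 τ := by
  refine intervalIntegral.integral_congr_ae ?_
  filter_upwards [measure_singleton (μ := volume) (0 : ℝ) |> measure_eq_zero_iff_ae_notMem.mp]
    with τ (hτ : τ ≠ 0) _
  rw [dslope_of_ne f hτ, slope_def_field, hf, sub_zero, sub_zero]

theorem IsMinOn.ciInf_eq {ι α : Type*} [ConditionallyCompleteLinearOrder α] {f : ι → α} {c : ι}
    (h : IsMinOn f univ c) : ⨅ i, f i = f c :=
  have : Nonempty ι := ⟨c⟩
  ciInf_eq_of_forall_ge_of_forall_gt_exists_lt (fun _ ↦ h trivial) fun _ hw ↦ ⟨c, hw⟩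

theorem accurate_model_uniform_optimal_general (N : ℕ)
    (Λ : Fin N → ℝ → ℝ)
    (hconv : ∀ k, StrictConvexOn ℝ Set.univ (Λ k))
    (hdiff : ∀ k, Differentiable ℝ (Λ k))
    (h0 : ∀ k, Λ k 0 = 0)
    (hneg1 : ∀ k, Λ k (-1) = 0)
    (φ : Fin N → ℝ → ℝ)
    (hφ : ∀ k t, φ k t = ∫ τ in (0 : ℝ)..t, Λ k τ / τ)
    (Φ : Fin N → ℝ) (hΦ : ∀ k, Φ k = -(⨅ t : ℝ, φ k t)) :
    (∀ k, ∀ t : ℝ, t < 0 → Λ k t = 0 → t = -1) ∧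
      -(⨅ t : ℝ, ∑ k, φ k ((1 / (N : ℝ)) * t)) = ∑ k, Φ k := by
  refine ⟨fun k t ht hzero ↦ (hconv k).eq_of_map_eq_of_lt_s17 trivial trivial trivial ht
    (by norm_num) (hzero.trans (h0 k).symm) ((hneg1 k).trans (h0 k).symm), ?_⟩
  have hmin : ∀ k, IsMinOn (φ k) univ (-1) := by
    intro k
    have hφ_dslope : φ k = fun t ↦ ∫ τ in (0 : ℝ)..t, dslope (Λ k) 0 τ :=
      funext fun t ↦ (hφ k t).trans (intervalIntegral.integral_div_eq_integral_dslope (h0 k) 0 t)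
    rw [hφ_dslope]
    refine ((hconv k).convexOn.monotone_dslope (hdiff k 0)).isMinOn_integral_of_map_eq_zero ?_ 0
    rw [dslope_of_ne _ (by norm_num), slope_def_field, hneg1 k, h0 k, sub_zero, zero_div]
  have hscale : ∀ k : Fin N, 1 / (N : ℝ) * -N = -1 := fun k ↦ by
    have : (N : ℝ) ≠ 0 := Nat.cast_ne_zero.mpr k.pos.ne'
    field_simp
  have hsum : IsMinOn (fun t ↦ ∑ k, φ k ((1 / (N : ℝ)) * t)) univ (-N) := fun t _ ↦
    calc ∑ k, φ k (1 / (N : ℝ) * -N) = ∑ k, φ k (-1) :=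
          Finset.sum_congr rfl fun k _ ↦ by rw [hscale k]
      _ ≤ ∑ k, φ k (1 / (N : ℝ) * t) := Finset.sum_le_sum fun k _ ↦ hmin k trivial
  rw [hsum.ciInf_eq, ← Finset.sum_neg_distrib]
  exact Finset.sum_congr rfl fun k _ ↦ by rw [hΦ k, (hmin k).ciInf_eq, hscale k]

/-- Accurate signal model, network version: if each informative agent's LMGF `Λ_k` is
strictly convex and differentiable with `Λ_k 0 = 0`, `Λ_k'(0) > 0` and `Λ_k(-1) = 0`,
then every negative zero of `Λ_k` equals `-1`, and the uniform weights `π = (1/N)𝟙`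
achieve the upper bound `∑_k Φ_k` on the error exponent
`-inf_t ∑_k φ_k(π_k t)`, where `φ_k(t) = ∫₀ᵗ Λ_k(τ)/τ dτ` and `Φ_k = -inf_t φ_k(t)`. -/
theorem accurate_model_uniform_optimal (N : ℕ) (hN : 0 < N)
    (Λ : Fin N → ℝ → ℝ)
    (hconv : ∀ k, StrictConvexOn ℝ Set.univ (Λ k))
    (hdiff : ∀ k, Differentiable ℝ (Λ k))
    (h0 : ∀ k, Λ k 0 = 0) (hd : ∀ k, 0 < deriv (Λ k) 0)
    (hneg1 : ∀ k, Λ k (-1) = 0)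
    (φ : Fin N → ℝ → ℝ)
    (hφ : ∀ k t, φ k t = ∫ τ in (0 : ℝ)..t, Λ k τ / τ)
    (Φ : Fin N → ℝ) (hΦ : ∀ k, Φ k = -(⨅ t : ℝ, φ k t)) :
    (∀ k, ∀ t : ℝ, t < 0 → Λ k t = 0 → t = -1) ∧
      -(⨅ t : ℝ, ∑ k, φ k ((1 / (N : ℝ)) * t)) = ∑ k, Φ k :=
  accurate_model_uniform_optimal_general N Λ hconv hdiff h0 hneg1 φ hφ Φ hΦ
end
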